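/- arXiv:2211.14231 — 2 statements merged into one kernel-verified Lean document; each statement's English description precedes it below -/
import Mathlib

section
/- For any local hidden variable behavior on the CHSH scenario, i.e., any probability distribution p(a,b|x,y) with a,b ∈ {+1,−1}, x,y ∈ {0,1} of the form p(a,b|x,y) = Σ_λ p(λ) p_λ^A(a|x) p_λ^B(b|y) with p(λ) a probability distribution and p_λ^A, p_λ^B conditional probability distributions, the CHSH expression C(p) = Σ_{x,y} (−1)^{xy} ⟨a_x b_y⟩, where ⟨a_x b_y⟩ = Σ_{a,b} a·b·p(a,b|x,y), satisfies C(p) ≤ 2. -/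
/-- Sign value of a binary outcome: `0 ↦ +1`, `1 ↦ -1`. -/
noncomputable def sgn (k : Fin 2) : ℝ := if k = 0 then 1 else -1

/-- The CHSH sign `(-1)^(x·y)`. -/
noncomputable def chshSign (x y : Fin 2) : ℝ := if x = 1 ∧ y = 1 then -1 else 1

/-- Correlator `⟨a_x b_y⟩ = ∑_{a,b} a·b·p(a,b|x,y)`. -/
noncomputable def corr (p : Fin 2 → Fin 2 → Fin 2 → Fin 2 → ℝ) (x y : Fin 2) : ℝ :=
  ∑ a : Fin 2, ∑ b : Fin 2, sgn a * sgn b * p a b x y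

/-- The CHSH expression `C(p) = ∑_{x,y} (-1)^(x·y) ⟨a_x b_y⟩`. -/
noncomputable def CHSH (p : Fin 2 → Fin 2 → Fin 2 → Fin 2 → ℝ) : ℝ :=
  ∑ x : Fin 2, ∑ y : Fin 2, chshSign x y * corr p x y

/-- Any local hidden variable behavior satisfies the CHSH inequality `C(p) ≤ 2`. -/
theorem chsh_local_bound (n : ℕ) (w : Fin n → ℝ)
    (pA pB : Fin n → Fin 2 → Fin 2 → ℝ)
    (hw : ∀ l, 0 ≤ w l) (hw1 : ∑ l, w l = 1)
    (hpA : ∀ l a x, 0 ≤ pA l a x) (hpA1 : ∀ l x, ∑ a, pA l a x = 1)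
    (hpB : ∀ l b y, 0 ≤ pB l b y) (hpB1 : ∀ l y, ∑ b, pB l b y = 1)
    (p : Fin 2 → Fin 2 → Fin 2 → Fin 2 → ℝ)
    (hp : ∀ a b x y, p a b x y = ∑ l, w l * pA l a x * pB l b y) :
    CHSH p ≤ 2 := by
  set A : Fin n → Fin 2 → ℝ := fun l x => pA l 0 x - pA l 1 x with hA
  set B : Fin n → Fin 2 → ℝ := fun l y => pB l 0 y - pB l 1 y with hB
  have key : CHSH p = ∑ l, w l *
      (A l 0 * B l 0 + A l 0 * B l 1 + A l 1 * B l 0 - A l 1 * B l 1) := by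
    simp only [CHSH, corr, chshSign, sgn, hp, Fin.sum_univ_two]
    norm_num
    simp only [← Finset.sum_add_distrib, ← Finset.sum_sub_distrib, ← sub_eq_add_neg,
      ← Finset.sum_neg_distrib]
    apply Finset.sum_congr rfl
    intro l _
    simp only [hA, hB]
    ring
  rw [key]
  have h2 : (2 : ℝ) = ∑ l, w l * 2 := by rw [← Finset.sum_mul, hw1, one_mul]
  rw [h2]
  apply Finset.sum_le_sum
  intro l _
  have hAb : ∀ x, -1 ≤ A l x ∧ A l x ≤ 1 := by
    intro x
    have h1 := hpA1 l x
    simp [Fin.sum_univ_two] at h1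
    have := hpA l 0 x
    have := hpA l 1 x
    constructor <;> simp [hA] <;> linarith
  have hBb : ∀ y, -1 ≤ B l y ∧ B l y ≤ 1 := by
    intro y
    have h1 := hpB1 l y
    simp [Fin.sum_univ_two] at h1
    have := hpB l 0 y
    have := hpB l 1 y
    constructor <;> simp [hB] <;> linarith
  have hE : A l 0 * B l 0 + A l 0 * B l 1 + A l 1 * B l 0 - A l 1 * B l 1 ≤ 2 := by
    obtain ⟨a0l, a0r⟩ := hAb 0
    obtain ⟨a1l, a1r⟩ := hAb 1
    obtain ⟨b0l, b0r⟩ := hBb 0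
    obtain ⟨b1l, b1r⟩ := hBb 1
    rcases le_total 0 (B l 0 + B l 1) with hs | hs
    · rcases le_total 0 (B l 0 - B l 1) with ht | ht
      · nlinarith [mul_nonneg (show (0:ℝ) ≤ 1 - A l 0 by linarith) hs,
          mul_nonneg (show (0:ℝ) ≤ 1 - A l 1 by linarith) ht]
      · nlinarith [mul_nonneg (show (0:ℝ) ≤ 1 - A l 0 by linarith) hs,
          mul_nonneg (show (0:ℝ) ≤ 1 + A l 1 by linarith) (show (0:ℝ) ≤ -(B l 0 - B l 1) by linarith)]
    · rcases le_total 0 (B l 0 - B l 1) with ht | ht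
      · nlinarith [mul_nonneg (show (0:ℝ) ≤ 1 + A l 0 by linarith) (show (0:ℝ) ≤ -(B l 0 + B l 1) by linarith),
          mul_nonneg (show (0:ℝ) ≤ 1 - A l 1 by linarith) ht]
      · nlinarith [mul_nonneg (show (0:ℝ) ≤ 1 + A l 0 by linarith) (show (0:ℝ) ≤ -(B l 0 + B l 1) by linarith),
          mul_nonneg (show (0:ℝ) ≤ 1 + A l 1 by linarith) (show (0:ℝ) ≤ -(B l 0 - B l 1) by linarith)]
  exact mul_le_mul_of_nonneg_left hE (hw l)
end

section
/- Consider a bipartite scenario with Alice having N settings and N' outcomes, Bob M settings and M' outcomes, and any no-signaling target behavior p_NL(a,b|x,y). There exists a local hidden variable model (with hidden variables λ_A ∈ [N'], λ_B ∈ [M'], λ_X ∈ [N], λ_Y ∈ [M]) producing outcomes with a no-click symbol ⊥ that exactly reproduces the inefficient-detector behavior: p(a,b|x,y) = η_A η_B p_NL(a,b|x,y), p(a,⊥|x,y) = η_A(1−η_B)p_NL^A(a|x), p(⊥,b|x,y) = (1−η_A)η_B p_NL^B(b|y), p(⊥,⊥|x,y) = (1−η_A)(1−η_B), with η_A = 1/N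 and η_B = 1/M. -/
lemma indS {α β : Type*} [DecidableEq α] [DecidableEq β] (x x' : α) (a a' : β) :
    (if (if x = x' then some a' else none) = some a then (1:ℝ) else 0)
  = (if x = x' then (1:ℝ) else 0) * (if a' = a then 1 else 0) := by
  split_ifs <;> simp_all

lemma indN {α β : Type*} [DecidableEq α] [DecidableEq β] (x x' : α) (a' : β) :
    (if (if x = x' then some a' else none) = none then (1:ℝ) else 0)
  = (if x = x' then (0:ℝ) else 1) := by
  split_ifs <;> simp_all

lemma sum_ne {α : Type*} [Fintype α] [DecidableEq α] (y : α) (g : α → ℝ) :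
    ∑ y', (if y = y' then 0 else g y') = (∑ y', g y') - g y := by
  have h : ∀ y', (if y = y' then (0:ℝ) else g y') = g y' - (if y = y' then g y' else 0) := by
    intro y'; split <;> simp_all
  simp [h, Finset.sum_sub_distrib, Finset.sum_ite_eq]

lemma sum_ite_push {α : Type*} [Fintype α] (P : Prop) [Decidable P] (g : α → ℝ) :
    ∑ y', (if P then g y' else 0) = if P then ∑ y', g y' else 0 := by split <;> simp

/-- Attack 1: for any no-signaling behavior `p_NL` (Alice: `N` settings, `N'` outcomes;
Bob: `M` settings, `M'` outcomes), there is a deterministic local hidden variable model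
(hidden variable `(λ_A,λ_B,λ_X,λ_Y)`, outputs in `Option` with `none = ⊥`) that exactly
reproduces the inefficient-detector statistics with `η_A = 1/N` and `η_B = 1/M`. -/
theorem attack_one (N M N' M' : ℕ) (hN : 0 < N) (hM : 0 < M) (hN' : 0 < N') (hM' : 0 < M')
    (pNL : Fin N' → Fin M' → Fin N → Fin M → ℝ)
    (hnn : ∀ a b x y, 0 ≤ pNL a b x y)
    (hnorm : ∀ x y, ∑ a, ∑ b, pNL a b x y = 1)
    (pAmar : Fin N' → Fin N → ℝ) (pBmar : Fin M' → Fin M → ℝ)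
    -- no-signaling: the marginals are independent of the other party's setting
    (hA : ∀ a x y, ∑ b, pNL a b x y = pAmar a x)
    (hB : ∀ b x y, ∑ a, pNL a b x y = pBmar b y) :
    ∃ (w : Fin N' × Fin M' × Fin N × Fin M → ℝ)
      (resA : Fin N' × Fin M' × Fin N × Fin M → Fin N → Option (Fin N'))
      (resB : Fin N' × Fin M' × Fin N × Fin M → Fin M → Option (Fin M')),
      (∀ l, 0 ≤ w l) ∧ (∑ l, w l = 1) ∧
      (∀ (a : Fin N') (b : Fin M') (x : Fin N) (y : Fin M),
        (∑ l, w l * (if resA l x = some a then 1 else 0) * (if resB l y = some b then 1 else 0))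
          = ((N : ℝ)⁻¹) * ((M : ℝ)⁻¹) * pNL a b x y) ∧
      (∀ (a : Fin N') (x : Fin N) (y : Fin M),
        (∑ l, w l * (if resA l x = some a then 1 else 0) * (if resB l y = none then 1 else 0))
          = ((N : ℝ)⁻¹) * (1 - (M : ℝ)⁻¹) * pAmar a x) ∧
      (∀ (b : Fin M') (x : Fin N) (y : Fin M),
        (∑ l, w l * (if resA l x = none then 1 else 0) * (if resB l y = some b then 1 else 0))
          = (1 - (N : ℝ)⁻¹) * ((M : ℝ)⁻¹) * pBmar b y) ∧
      (∀ (x : Fin N) (y : Fin M),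
        (∑ l, w l * (if resA l x = none then 1 else 0) * (if resB l y = none then 1 else 0))
          = (1 - (N : ℝ)⁻¹) * (1 - (M : ℝ)⁻¹)) := by
  have hNpos : (0:ℝ) < N := by exact_mod_cast hN
  have hMpos : (0:ℝ) < M := by exact_mod_cast hM
  refine ⟨fun l => (N:ℝ)⁻¹ * (M:ℝ)⁻¹ * pNL l.1 l.2.1 l.2.2.1 l.2.2.2,
    fun l x => if x = l.2.2.1 then some l.1 else none,
    fun l y => if y = l.2.2.2 then some l.2.1 else none, ?_, ?_, ?_, ?_, ?_, ?_⟩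
  · intro l
    have := hnn l.1 l.2.1 l.2.2.1 l.2.2.2
    positivity
  · simp only [Fintype.sum_prod_type]
    have key : ∀ (x : Fin N) (y : Fin M), ∑ a : Fin N', ∑ b : Fin M', (N:ℝ)⁻¹ * (M:ℝ)⁻¹ * pNL a b x y
        = (N:ℝ)⁻¹ * (M:ℝ)⁻¹ := by
      intro x y
      simp only [← Finset.mul_sum, hnorm x y, mul_one]
    conv_lhs => enter [2, a]; rw [Finset.sum_comm]
    rw [Finset.sum_comm]
    conv_lhs => enter [2, x, 2, a]; rw [Finset.sum_comm]
    conv_lhs => enter [2, x]; rw [Finset.sum_comm]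
    conv_lhs => enter [2, x, 2, y]; rw [key x y]
    simp [Finset.sum_const, Finset.card_univ]
    field_simp
  · intro a b x y
    simp only [Fintype.sum_prod_type, indS, indN]
    simp [mul_ite, ite_mul, mul_zero, zero_mul, mul_one, one_mul, Finset.sum_ite_eq,
      Finset.sum_ite_eq', eq_comm, sum_ne, sum_ite_push, Finset.sum_sub_distrib]
  · intro a x y
    simp only [Fintype.sum_prod_type, indS, indN]
    simp [mul_ite, ite_mul, mul_zero, zero_mul, mul_one, one_mul, Finset.sum_ite_eq,
      Finset.sum_ite_eq', eq_comm, sum_ne, sum_ite_push, Finset.sum_sub_distrib]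
    rw [Finset.sum_comm]
    simp only [← Finset.mul_sum, hA]
    simp [Finset.sum_const, Finset.card_univ]
    field_simp
  · intro b x y
    simp only [Fintype.sum_prod_type, indS, indN]
    simp [mul_ite, ite_mul, mul_zero, zero_mul, mul_one, one_mul, Finset.sum_ite_eq,
      Finset.sum_ite_eq', eq_comm, sum_ne, sum_ite_push, Finset.sum_sub_distrib]
    rw [Finset.sum_comm]
    simp only [← Finset.mul_sum, hB]
    simp [Finset.sum_const, Finset.card_univ]
    field_simp
  · intro x y
    simp only [Fintype.sum_prod_type, indS, indN]
    simp [mul_ite, ite_mul, mul_zero, zero_mul, mul_one, one_mul, Finset.sum_ite_eq,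
      Finset.sum_ite_eq', eq_comm, sum_ne, sum_ite_push, Finset.sum_sub_distrib]
    have base : ∀ (x : Fin N) (y : Fin M), ∑ a : Fin N', ∑ b : Fin M',
        (N:ℝ)⁻¹ * (M:ℝ)⁻¹ * pNL a b x y = (N:ℝ)⁻¹ * (M:ℝ)⁻¹ := by
      intro x y
      simp only [← Finset.mul_sum, hnorm x y, mul_one]
    have T1 : (∑ a : Fin N', ∑ b : Fin M', ∑ x' : Fin N, ∑ y' : Fin M,
        (N:ℝ)⁻¹ * (M:ℝ)⁻¹ * pNL a b x' y') = 1 := by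
      conv_lhs => enter [2, a]; rw [Finset.sum_comm]
      rw [Finset.sum_comm]
      conv_lhs => enter [2, x, 2, a]; rw [Finset.sum_comm]
      conv_lhs => enter [2, x]; rw [Finset.sum_comm]
      conv_lhs => enter [2, x, 2, y]; rw [base x y]
      simp [Finset.sum_const, Finset.card_univ]
      field_simp
    have T2 : ∀ x : Fin N, (∑ a : Fin N', ∑ b : Fin M', ∑ y' : Fin M,
        (N:ℝ)⁻¹ * (M:ℝ)⁻¹ * pNL a b x y') = (M:ℝ) * ((N:ℝ)⁻¹ * (M:ℝ)⁻¹) := by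
      intro x
      conv_lhs => enter [2, a]; rw [Finset.sum_comm]
      rw [Finset.sum_comm]
      conv_lhs => enter [2, y]; rw [base x y]
      simp [Finset.sum_const, Finset.card_univ]
    have T3 : ∀ y : Fin M, (∑ a : Fin N', ∑ b : Fin M', ∑ x' : Fin N,
        (N:ℝ)⁻¹ * (M:ℝ)⁻¹ * pNL a b x' y) = (N:ℝ) * ((N:ℝ)⁻¹ * (M:ℝ)⁻¹) := by
      intro y
      conv_lhs => enter [2, a]; rw [Finset.sum_comm]
      rw [Finset.sum_comm]
      conv_lhs => enter [2, x]; rw [base x y]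
      simp [Finset.sum_const, Finset.card_univ]
    rw [T1, T2 x, T3 y, base x y]
    field_simp
end
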